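/- Let (Y_t)_{t≥0} be a real-valued stochastic process on a probability space whose sample paths are càdlàg (right-continuous with left limits), and let Y_∞ be a real random variable on the same space. If for every fixed s > 0 the sequence (Y_{ns})_{n∈ℕ} converges in probability to Y_∞ as n → ∞ through the positive integers, then Y_t converges in probability to Y_∞ as t → ∞ through the reals. (Lemma 5.1 of the paper, convergence-in-probability version.) -/

import Mathlib

/-!
Let `G t = 𝔼[min (|Y_t - Y_∞|) 1]`. Convergence in probability is equivalent to `G → 0`,
and dominated convergence makes `G` right-continuous because the paths are. So it suffices to
prove Croft's lemma for right-continuous functions: if `g (n s) → L` for every `s > 0` then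
`g t → L`. Otherwise `g` stays outside a closed neighbourhood of `L` on a set `A` which, by
right-continuity, has unbounded interior `B`; by Baire's theorem the `s` with `n s ∈ B` for
infinitely many `n` form a dense `G_δ` in `(0, ∞)`, and any such `s` contradicts `g (n s) → L`.
-/

open MeasureTheory Filter Set
open scoped ENNReal Topology ProbabilityTheory

theorem exists_mem_Ioo_nat_mul_mem {B : Set ℝ} (hB : ∀ x, ∃ b ∈ B, x < b) (N : ℕ) {a c : ℝ}
    (ha : 0 ≤ a) (hac : a < c) : ∃ s ∈ Ioo a c, ∃ n : ℕ, N ≤ n ∧ (n : ℝ) * s ∈ B := by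
  have hc : 0 < c := ha.trans_lt hac
  -- Past `a c / (c - a)` the intervals `(n a, n c)` overlap, so `b / n ∈ (a, c)` for
  -- `n = ⌊b / c⌋₊ + 1`.
  obtain ⟨b, hbB, hb⟩ := hB (max (N * c) (a * c / (c - a)))
  rw [max_lt_iff] at hb
  have hb0 : 0 < b := lt_of_le_of_lt (by have := sub_pos.2 hac; positivity) hb.2
  set n : ℕ := ⌊b / c⌋₊ + 1
  have hn : b / c < n := by simpa [n] using Nat.lt_floor_add_one (b / c)
  have hn' : (n : ℝ) ≤ b / c + 1 := by
    simp only [n, Nat.cast_add, Nat.cast_one, add_le_add_iff_right]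
    exact Nat.floor_le (by positivity)
  have hn0 : (0 : ℝ) < n := by positivity
  refine ⟨b / n, ⟨?_, ?_⟩, n, ?_, ?_⟩
  · rw [lt_div_iff₀ hn0]
    rw [div_lt_iff₀ (sub_pos.2 hac)] at hb
    calc a * n ≤ a * (b / c + 1) := by gcongr
      _ < b := by
        rw [mul_add, mul_one, ← mul_div_assoc, div_add' _ _ _ hc.ne', div_lt_iff₀ hc]
        linarith
  · rw [div_lt_iff₀ hn0]
    rwa [div_lt_iff₀ hc, mul_comm] at hn
  · have hNb : (N : ℝ) ≤ b / c := by rw [le_div_iff₀ hc]; exact hb.1.le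
    exact (Nat.le_floor hNb).trans (Nat.le_succ _)
  · rwa [mul_div_cancel₀ _ hn0.ne']

theorem exists_pos_frequently_nat_mul_mem {B : Set ℝ} (hBo : IsOpen B)
    (hB : ∀ x, ∃ b ∈ B, x < b) : ∃ s > 0, ∃ᶠ n : ℕ in atTop, (n : ℝ) * s ∈ B := by
  set U : ℕ → Set ℝ := fun N => Iio 0 ∪ ⋃ n ≥ N, (fun s => (n : ℝ) * s) ⁻¹' B
  have hUo (N : ℕ) : IsOpen (U N) :=
    isOpen_Iio.union <| isOpen_biUnion fun n _ => hBo.preimage (continuous_const_mul _)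
  have hUd (N : ℕ) : Dense (U N) := by
    refine dense_of_exists_between fun a c hac => ?_
    rcases lt_or_ge a 0 with ha | ha
    · obtain ⟨s, has, hs⟩ := exists_between (lt_min hac ha)
      exact ⟨s, Or.inl (hs.trans_le (min_le_right _ _)), has, hs.trans_le (min_le_left _ _)⟩
    · obtain ⟨s, hs, n, hn, hnB⟩ := exists_mem_Ioo_nat_mul_mem hB N ha hac
      exact ⟨s, Or.inr (mem_biUnion hn hnB), hs⟩
  obtain ⟨s, hsU, hs⟩ := (dense_iInter_of_isOpen hUo hUd).exists_mem_open isOpen_Ioi nonempty_Ioi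
  refine ⟨s, hs, frequently_atTop.2 fun N => ?_⟩
  obtain hneg | hmem := mem_iInter.1 hsU N
  · exact (lt_asymm (mem_Iio.1 hneg) (mem_Ioi.1 hs)).elim
  · simpa using hmem

theorem tendsto_atTop_of_tendsto_nat_mul {X : Type*} [TopologicalSpace X] [RegularSpace X]
    {g : ℝ → X} {L : X} (hg : ∀ t, 0 < t → ContinuousWithinAt g (Ici t) t)
    (h : ∀ s, 0 < s → Tendsto (fun n : ℕ => g (n * s)) atTop (𝓝 L)) : Tendsto g atTop (𝓝 L) := by
  rw [(closed_nhds_basis L).tendsto_right_iff]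
  rintro V ⟨hV, hVc⟩
  by_contra hfreq
  set A := {t | 0 < t ∧ g t ∉ V}
  have hA (x : ℝ) : ∃ b ∈ interior A, x < b := by
    obtain ⟨t, hxt, hgt⟩ := frequently_atTop.1 (not_eventually.1 hfreq) (max x 1)
    have ht : 0 < t := zero_lt_one.trans_le ((le_max_right _ _).trans hxt)
    have hAt : A ∈ 𝓝[≥] t :=
      inter_mem (mem_nhdsWithin_of_mem_nhds (Ioi_mem_nhds ht))
        ((hg t ht).preimage_mem_nhdsWithin (hVc.isOpen_compl.mem_nhds hgt))
    obtain ⟨u, htu, hAu⟩ := mem_nhdsGE_iff_exists_Ico_subset.1 hAt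
    refine ⟨(t + u) / 2, interior_maximal (Ioo_subset_Ico_self.trans hAu) isOpen_Ioo ?_, ?_⟩
    · constructor <;> linarith [mem_Ioi.1 htu]
    · linarith [mem_Ioi.1 htu, le_max_left x 1]
  obtain ⟨s, hs, hsA⟩ := exists_pos_frequently_nat_mul_mem isOpen_interior hA
  obtain ⟨n, hnA, hnV⟩ := (hsA.and_eventually (h s hs hV)).exists
  exact (interior_subset hnA).2 hnV

namespace MeasureTheory

variable {α ι E : Type*} {m : MeasurableSpace α} {μ : Measure α} {l : Filter ι}

noncomputable def truncEDist [EDist E] (μ : Measure α) (f g : α → E) : ℝ≥0∞ :=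
  ∫⁻ x, min (edist (f x) (g x)) 1 ∂μ

theorem tendstoInMeasure_iff_measure_lt_dist [PseudoMetricSpace E] {f : ι → α → E} {g : α → E} :
    TendstoInMeasure μ f l g ↔
      ∀ ε, 0 < ε → Tendsto (fun i => μ {x | ε < dist (f i x) (g x)}) l (𝓝 0) := by
  rw [tendstoInMeasure_iff_dist]
  refine ⟨fun h ε hε => ?_, fun h ε hε => ?_⟩
  · exact tendsto_of_tendsto_of_tendsto_of_le_of_le tendsto_const_nhds (h ε hε)
      (fun _ => zero_le) fun i => measure_mono fun x (hx : ε < _) => hx.le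
  · exact tendsto_of_tendsto_of_tendsto_of_le_of_le tendsto_const_nhds (h (ε / 2) (half_pos hε))
      (fun _ => zero_le) fun i => measure_mono fun x (hx : ε ≤ _) => by
        change ε / 2 < _; linarith

theorem TendstoInMeasure.tendsto_truncEDist [EDist E] [IsFiniteMeasure μ] {f : ι → α → E}
    {g : α → E} (h : TendstoInMeasure μ f l g) :
    Tendsto (fun i => truncEDist μ (f i) g) l (𝓝 0) := by
  refine ENNReal.tendsto_nhds_zero.2 fun η hη => ?_
  have hη2 : 0 < η / 2 := ENNReal.half_pos hη.ne'
  set ε := η / 2 / μ univ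
  have hε : 0 < ε := ENNReal.div_pos hη2.ne' (measure_ne_top μ univ)
  filter_upwards [ENNReal.tendsto_nhds_zero.1 (h ε hε) (η / 2) hη2] with i hi
  set S := {x | ε ≤ edist (f i x) (g x)}
  have hpt (x : α) : min (edist (f i x) (g x)) 1 ≤ ε + S.indicator (fun _ => 1) x := by
    by_cases hx : x ∈ S
    · simp [indicator_of_mem hx]
    · rw [indicator_of_notMem hx, add_zero]
      exact (min_le_left _ _).trans (not_le.1 hx).le
  calc truncEDist μ (f i) g ≤ ∫⁻ x, (ε + S.indicator (fun _ => 1) x) ∂μ := lintegral_mono hpt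
    _ = ε * μ univ + ∫⁻ x, S.indicator (fun _ => 1) x ∂μ := by
      rw [lintegral_add_left measurable_const, lintegral_const]
    _ ≤ η / 2 + η / 2 := by
      gcongr
      · exact (mul_comm _ _).trans_le ENNReal.mul_div_le
      · exact (lintegral_indicator_const_le S 1).trans (one_mul (μ S)).le |>.trans hi
    _ = η := ENNReal.add_halves η

theorem tendstoInMeasure_of_tendsto_truncEDist [EDist E] {f : ι → α → E} {g : α → E}
    (hf : ∀ᶠ i in l, AEMeasurable (fun x => edist (f i x) (g x)) μ)
    (h : Tendsto (fun i => truncEDist μ (f i) g) l (𝓝 0)) : TendstoInMeasure μ f l g := by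
  intro ε hε
  set c := min ε 1
  have hc : c ≠ 0 := (lt_min hε one_pos).ne'
  have hc' : c ≠ ∞ := (min_le_right ε 1).trans_lt ENNReal.one_lt_top |>.ne
  have hlim : Tendsto (fun i => truncEDist μ (f i) g / c) l (𝓝 0) := by
    simpa using ENNReal.Tendsto.div_const h (Or.inr hc)
  refine tendsto_of_tendsto_of_tendsto_of_le_of_le' tendsto_const_nhds hlim
    (Eventually.of_forall fun _ => zero_le) ?_
  filter_upwards [hf] with i hi
  calc μ {x | ε ≤ edist (f i x) (g x)} ≤ μ {x | c ≤ min (edist (f i x) (g x)) 1} :=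
        measure_mono fun x (hx : ε ≤ _) => min_le_min_right 1 hx
    _ ≤ truncEDist μ (f i) g / c := meas_ge_le_lintegral_div (hi.min aemeasurable_const) hc hc'

theorem tendsto_truncEDist [PseudoEMetricSpace E] [IsFiniteMeasure μ] [l.IsCountablyGenerated]
    {f : ι → α → E} {g h : α → E} (hf : ∀ᶠ i in l, AEMeasurable (fun x => edist (f i x) (g x)) μ)
    (hlim : ∀ᵐ x ∂μ, Tendsto (fun i => f i x) l (𝓝 (h x))) :
    Tendsto (fun i => truncEDist μ (f i) g) l (𝓝 (truncEDist μ h g)) := by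
  refine tendsto_lintegral_filter_of_dominated_convergence' (fun _ => 1)
    (hf.mono fun i hi => hi.min aemeasurable_const)
    (Eventually.of_forall fun i => ae_of_all _ fun x => min_le_right _ _)
    (by simp [measure_ne_top]) (hlim.mono fun x hx => ?_)
  exact (((continuous_id.edist continuous_const).min continuous_const).tendsto (h x)).comp hx

end MeasureTheory

theorem stmt3_general {Ω : Type*} [MeasureSpace Ω] [IsProbabilityMeasure (ℙ : Measure Ω)]
    (Y : ℝ → Ω → ℝ) (Yinf : Ω → ℝ)
    (hmeas : ∀ t : ℝ, 0 ≤ t → Measurable (Y t)) (hinfmeas : Measurable Yinf)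
    -- right-continuity of the paths at every `t ≥ 0`
    (hrc : ∀ ω, ∀ t : ℝ, 0 ≤ t → ContinuousWithinAt (fun s => Y s ω) (Set.Ici t) t)
    -- convergence in probability along every arithmetic sequence
    (hconv : ∀ s : ℝ, 0 < s → ∀ ε : ℝ, 0 < ε →
      Tendsto (fun n : ℕ => ℙ {ω | ε < |Y (n * s) ω - Yinf ω|}) atTop (𝓝 0)) :
    ∀ ε : ℝ, 0 < ε →
      Tendsto (fun t : ℝ => ℙ {ω | ε < |Y t ω - Yinf ω|}) atTop (𝓝 0) := by
  have hdist_meas (t : ℝ) (ht : 0 ≤ t) : AEMeasurable (fun ω => edist (Y t ω) (Yinf ω)) ℙ :=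
    ((hmeas t ht).edist hinfmeas).aemeasurable
  have hG_rc (t : ℝ) (ht : 0 < t) :
      ContinuousWithinAt (fun u => truncEDist ℙ (Y u) Yinf) (Ici t) t :=
    tendsto_truncEDist (eventually_nhdsWithin_of_forall fun u (hu : t ≤ u) =>
      hdist_meas u (ht.le.trans hu)) (ae_of_all _ fun ω => hrc ω t ht.le)
  have hG_nat (s : ℝ) (hs : 0 < s) :
      Tendsto (fun n : ℕ => truncEDist ℙ (Y (n * s)) Yinf) atTop (𝓝 0) :=
    (tendstoInMeasure_iff_measure_lt_dist (f := fun n : ℕ => Y (n * s)).2 <| by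
      simpa only [Real.dist_eq] using hconv s hs).tendsto_truncEDist
  have hY : TendstoInMeasure ℙ Y atTop Yinf :=
    tendstoInMeasure_of_tendsto_truncEDist
      ((eventually_ge_atTop 0).mono hdist_meas) (tendsto_atTop_of_tendsto_nat_mul hG_rc hG_nat)
  simpa only [Real.dist_eq] using tendstoInMeasure_iff_measure_lt_dist.1 hY

/-- Lemma 5.1 of the paper (convergence-in-probability version): if a real-valued process
with càdlàg paths satisfies `Y_{ns} → Y_∞` in probability along the integers for every fixed
`s > 0`, then `Y_t → Y_∞` in probability as `t → ∞` through the reals. -/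
theorem stmt3 {Ω : Type*} [MeasureSpace Ω] [IsProbabilityMeasure (ℙ : Measure Ω)]
    (Y : ℝ → Ω → ℝ) (Yinf : Ω → ℝ)
    (hmeas : ∀ t : ℝ, 0 ≤ t → Measurable (Y t)) (hinfmeas : Measurable Yinf)
    -- right-continuity of the paths at every `t ≥ 0`
    (hrc : ∀ ω, ∀ t : ℝ, 0 ≤ t → ContinuousWithinAt (fun s => Y s ω) (Set.Ici t) t)
    -- existence of finite left limits of the paths at every `t > 0`
    (hll : ∀ ω, ∀ t : ℝ, 0 < t →
      ∃ l : ℝ, Tendsto (fun s => Y s ω) (𝓝[Set.Ico 0 t] t) (𝓝 l))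
    -- convergence in probability along every arithmetic sequence
    (hconv : ∀ s : ℝ, 0 < s → ∀ ε : ℝ, 0 < ε →
      Tendsto (fun n : ℕ => ℙ {ω | ε < |Y (n * s) ω - Yinf ω|}) atTop (𝓝 0)) :
    ∀ ε : ℝ, 0 < ε →
      Tendsto (fun t : ℝ => ℙ {ω | ε < |Y t ω - Yinf ω|}) atTop (𝓝 0) :=
  stmt3_general Y Yinf hmeas hinfmeas hrc hconv
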